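/- The multiset of tree-inversions of any s-decreasing tree satisfies the transitivity condition: for all a < b < c, if card(c,b) = i then card(b,a) = 0 or card(c,a) ≥ i. -/
import Mathlib


/-- Planar rooted trees: leaves are unlabeled; internal nodes carry a natural
number label and an ordered list of children. -/
inductive STree : Type where
  | leaf : STree
  | node : ℕ → List STree → STree

namespace STree

mutual
  /-- `x` occurs as the label of an internal node of the tree. -/
  def mem (x : ℕ) : STree → Bool
    | .leaf => false
    | .node a cs => x == a || memL x cs
  def memL (x : ℕ) : List STree → Bool
    | [] => false
    | t :: ts => mem x t || memL x ts
end

mutual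
  /-- The list of internal node labels, in preorder. -/
  def labels : STree → List ℕ
    | .leaf => []
    | .node a cs => a :: labelsL cs
  def labelsL : List STree → List ℕ
    | [] => []
    | t :: ts => labels t ++ labelsL ts
end

mutual
  /-- Local well-formedness for the signature `s` : an internal node labeled `a`
  has `s a + 1` children, and all labels below it are smaller than `a`. -/
  def wf (s : ℕ → ℕ) : STree → Prop
    | .leaf => True
    | .node a cs => cs.length = s a + 1 ∧ (∀ b ∈ labelsL cs, b < a) ∧ wfL s cs
  def wfL (s : ℕ → ℕ) : List STree → Prop
    | [] => True
    | t :: ts => wf s t ∧ wfL s ts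
end

/-- `T` is an `s`-decreasing tree: its internal nodes are labeled bijectively by
`1, …, n`, node `i` has `s i + 1` ordered children, and all descendants of a node
have smaller labels. -/
def IsSDecreasingTree (n : ℕ) (s : ℕ → ℕ) (T : STree) : Prop :=
  wf s T ∧ (labels T).Perm (List.range' 1 n)

/-- Index of the first tree of the list containing the label `x`. -/
def idxOf (x : ℕ) : List STree → ℕ
  | [] => 0
  | t :: ts => if mem x t then 0 else idxOf x ts + 1

mutual
  /-- The cardinality `card_T(y,x)` of the pair `(y,x)` in the tree:
  `0` if `x` is (weakly) left of `y`, `i` if `x` lies in the `i`-th child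
  subtree of `y`, and `s y` if `x` is right of `y`. -/
  def card (s : ℕ → ℕ) (y x : ℕ) : STree → ℕ
    | .leaf => 0
    | .node a cs => if a = y then idxOf x cs else cardL s y x cs
  def cardL (s : ℕ → ℕ) (y x : ℕ) : List STree → ℕ
    | [] => 0
    | t :: ts =>
      if mem y t then
        (if mem x t then card s y x t else if memL x ts then s y else 0)
      else (if mem x t then 0 else cardL s y x ts)
end

/-- The tree-inversion multiset of `T`, as a multiplicity function on pairs
`(y,x)` with `1 ≤ x < y ≤ n`. -/
def treeInv (n : ℕ) (s : ℕ → ℕ) (T : STree) : ℕ → ℕ → ℕ := fun y x =>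
  if 1 ≤ x ∧ x < y ∧ y ≤ n then card s y x T else 0

/-- A multi inversion set on `1, …, n` bounded by the weak composition `s`. -/
def IsMultiInvSet (n : ℕ) (s : ℕ → ℕ) (I : ℕ → ℕ → ℕ) : Prop :=
  (∀ y x, I y x ≤ s y) ∧ ∀ y x, ¬(1 ≤ x ∧ x < y ∧ y ≤ n) → I y x = 0

/-- Transitivity: for `a < b < c`, `card(c,b) = i` implies `card(b,a) = 0` or
`card(c,a) ≥ i`. -/
def InvTransitive (I : ℕ → ℕ → ℕ) : Prop :=
  ∀ a b c : ℕ, a < b → b < c → I b a = 0 ∨ I c b ≤ I c a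

/-- Planarity: for `a < b < c`, `card(c,a) = i` implies `card(b,a) = s b` or
`card(c,b) ≥ i`. -/
def InvPlanar (s : ℕ → ℕ) (I : ℕ → ℕ → ℕ) : Prop :=
  ∀ a b c : ℕ, a < b → b < c → I b a = s b ∨ I c a ≤ I c b

/-- An `s`-tree-inversion set: a bounded multi inversion set that is transitive
and planar. -/
def IsTreeInvSet (n : ℕ) (s : ℕ → ℕ) (I : ℕ → ℕ → ℕ) : Prop :=
  IsMultiInvSet n s I ∧ InvTransitive I ∧ InvPlanar s I

/-- Inclusion of multi inversion sets: pointwise comparison of multiplicities. -/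
def invLE (I J : ℕ → ℕ → ℕ) : Prop := ∀ y x, I y x ≤ J y x

/-- The `s`-weak order: inclusion of tree-inversion multisets. -/
def sWeakLE (n : ℕ) (s : ℕ → ℕ) (T R : STree) : Prop :=
  invLE (treeInv n s T) (treeInv n s R)

/-- Union of multi inversion sets: pointwise maximum. -/
def invUnion (I J : ℕ → ℕ → ℕ) : ℕ → ℕ → ℕ := fun y x => max (I y x) (J y x)

/-- Transitive closure: `tc I (c,a)` is the maximal value of `I (b₁, b₂)` over
all transitivity paths `c = b₁ > b₂ > … > b_k = a` (consecutive entries have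
positive multiplicity). -/
noncomputable def tc (I : ℕ → ℕ → ℕ) : ℕ → ℕ → ℕ := fun c a =>
  sSup {v | ∃ (b : ℕ) (l : List ℕ),
    List.Chain (fun u w => w < u ∧ 0 < I u w) c (b :: l) ∧
    (b :: l).getLast (List.cons_ne_nil b l) = a ∧ v = I c b}

/-- Adding the inversion `(c,a)`: increase its multiplicity by one. -/
def addInv (I : ℕ → ℕ → ℕ) (c a : ℕ) : ℕ → ℕ → ℕ := fun y x =>
  if y = c ∧ x = a then I y x + 1 else I y x

mutual
  /-- `a` is a (proper) descendant of the node labeled `c`. -/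
  def descIn (c a : ℕ) : STree → Bool
    | .leaf => false
    | .node b cs => (b == c && memL a cs) || descInL c a cs
  def descInL (c a : ℕ) : List STree → Bool
    | [] => false
    | t :: ts => descIn c a t || descInL c a ts
end

mutual
  /-- `a` belongs to the rightmost child subtree of the node labeled `c`. -/
  def inRight (c a : ℕ) : STree → Bool
    | .leaf => false
    | .node b cs =>
      (b == c && (match cs.getLast? with
        | some t => mem a t
        | none => false)) || inRightL c a cs
  def inRightL (c a : ℕ) : List STree → Bool
    | [] => false
    | t :: ts => inRight c a t || inRightL c a ts
end

mutual
  /-- `a` belongs to the leftmost child subtree of the node labeled `c`. -/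
  def inLeft (c a : ℕ) : STree → Bool
    | .leaf => false
    | .node b cs =>
      (b == c && (match cs.head? with
        | some t => mem a t
        | none => false)) || inLeftL c a cs
  def inLeftL (c a : ℕ) : List STree → Bool
    | [] => false
    | t :: ts => inLeft c a t || inLeftL c a ts
end

mutual
  /-- The rightmost child subtree of the node labeled `a` is empty (a leaf). -/
  def rightEmpty (a : ℕ) : STree → Bool
    | .leaf => false
    | .node b cs =>
      (b == a && (match cs.getLast? with
        | some .leaf => true
        | _ => false)) || rightEmptyL a cs
  def rightEmptyL (a : ℕ) : List STree → Bool
    | [] => false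
    | t :: ts => rightEmpty a t || rightEmptyL a ts
end

/-- `(a,c)` is a tree-ascent of `T`: `a` is a descendant of `c`, not in the
rightmost subtree of `c`; `a` lies in the rightmost subtree of any `b` with
`a < b < c` having `a` as a descendant; and if `s a > 0` the rightmost
(strict right) subtree of `a` is empty. -/
def IsTreeAscent (s : ℕ → ℕ) (T : STree) (a c : ℕ) : Prop :=
  a < c ∧ descIn c a T = true ∧ inRight c a T = false ∧
  (∀ b : ℕ, a < b → b < c → descIn b a T = true → inRight b a T = true) ∧
  (0 < s a → rightEmpty a T = true)

/-- `a` is the root label of the tree. -/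
def hasRoot (a : ℕ) : STree → Bool
  | .leaf => false
  | .node b _ => a == b

mutual
  /-- `a` is a direct child of the node `c`, but not its rightmost child. -/
  def nonRightChild (c a : ℕ) : STree → Bool
    | .leaf => false
    | .node b cs => (b == c && cs.dropLast.any (hasRoot a)) || nonRightChildL c a cs
  def nonRightChildL (c a : ℕ) : List STree → Bool
    | [] => false
    | t :: ts => nonRightChild c a t || nonRightChildL c a ts
end

/-- `(a,c)` is a Tamari-ascent of `T`: `a` is a non-right child of `c`. -/
def IsTamariAscent (T : STree) (a c : ℕ) : Prop :=
  a < c ∧ nonRightChild c a T = true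

mutual
  /-- Horizontal mirror image of a tree: the order of children is reversed at
  every internal node. -/
  def mirror : STree → STree
    | .leaf => .leaf
    | .node a cs => .node a (mirrorL cs)
  def mirrorL : List STree → List STree
    | [] => []
    | t :: ts => mirrorL ts ++ [mirror t]
end

/-- `T` is an `s`-Tamari tree: `card(c,a) ≤ card(c,b)` for all `a < b < c`. -/
def TamariProp (n : ℕ) (s : ℕ → ℕ) (T : STree) : Prop :=
  ∀ a b c : ℕ, a < b → b < c → treeInv n s T c a ≤ treeInv n s T c b

/-- `T` is an `s`-maximal-Tamari tree: `card(b,a) = s b` implies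
`card(c,a) = s c` for all `c > b`. -/
def MaxTamariProp (n : ℕ) (s : ℕ → ℕ) (T : STree) : Prop :=
  ∀ a b c : ℕ, 1 ≤ a → a < b → b < c → c ≤ n →
    treeInv n s T b a = s b → treeInv n s T c a = s c

/-- The projection `π↓` on inversion sets:
`card_Q(c,a) = min { card_T(c,b) : a ≤ b < c }`. -/
noncomputable def pidownInv (n : ℕ) (s : ℕ → ℕ) (T : STree) : ℕ → ℕ → ℕ :=
  fun c a => sInf {v | ∃ b : ℕ, a ≤ b ∧ b < c ∧ v = treeInv n s T c b}

open scoped Classical in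
/-- The projection `π↑` on inversion sets: `card_R(c,a) = s c` if there is
`a < b < c` with `card_T(b,a) = s b`, and `card_R(c,a) = card_T(c,a)` otherwise. -/
noncomputable def piupInv (n : ℕ) (s : ℕ → ℕ) (T : STree) : ℕ → ℕ → ℕ :=
  fun c a =>
    if 1 ≤ a ∧ a < c ∧ c ≤ n then
      if ∃ b : ℕ, a < b ∧ b < c ∧ treeInv n s T b a = s b then s c
      else treeInv n s T c a
    else 0


mutual
  theorem mem_labels (x : ℕ) : ∀ T, mem x T = true → x ∈ labels T
    | .node a cs, h => by
      simp [mem] at h; simp [labels]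
      rcases h with h | h
      · exact Or.inl h
      · exact Or.inr (memL_labelsL x cs h)
  theorem memL_labelsL (x : ℕ) : ∀ cs, memL x cs = true → x ∈ labelsL cs
    | t :: ts, h => by
      simp [memL] at h; simp [labelsL]
      rcases h with h | h
      · exact Or.inl (mem_labels x t h)
      · exact Or.inr (memL_labelsL x ts h)
end

theorem cardL_eq_zero_of_y_absent (s : ℕ → ℕ) (y x : ℕ) :
    ∀ cs, memL y cs = false → cardL s y x cs = 0
  | [], _ => rfl
  | t :: ts, h => by
    simp [memL] at h
    rw [cardL, if_neg (by simp [h.1])]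
    by_cases hx : mem x t = true
    · rw [if_pos hx]
    · rw [if_neg hx]; exact cardL_eq_zero_of_y_absent s y x ts (by simp [h.2])

theorem cardL_eq_zero_of_x_absent (s : ℕ → ℕ) (y x : ℕ) :
    ∀ cs, memL x cs = false → cardL s y x cs = 0
  | [], _ => rfl
  | t :: ts, h => by
    simp [memL] at h
    rw [cardL]
    by_cases hy : mem y t = true
    · rw [if_pos hy, if_neg (by simp [h.1]), if_neg (by simp [h.2])]
    · rw [if_neg hy, if_neg (by simp [h.1])]
      exact cardL_eq_zero_of_x_absent s y x ts (by simp [h.2])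

theorem idxOf_lt_length (x : ℕ) :
    ∀ cs, memL x cs = true → idxOf x cs < cs.length
  | t :: ts, h => by
    simp [memL] at h
    rw [idxOf]
    by_cases hx : mem x t = true
    · rw [if_pos hx]; simp
    · rw [if_neg hx]
      simp only [List.length_cons, Nat.add_lt_add_iff_right]
      exact idxOf_lt_length x ts (h.resolve_left (by simpa using hx))

mutual
  theorem card_le (s : ℕ → ℕ) (b c : ℕ) (hbc : b < c) :
      ∀ T, wf s T → mem b T = true → card s c b T ≤ s c
    | .node r cs, hw, hm => by
      rw [card]
      by_cases hr : r = c
      · subst hr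
        rw [if_pos rfl]
        have hmL : memL b cs = true := by
          simp [mem] at hm
          rcases hm with hm | hm
          · omega
          · exact hm
        have := idxOf_lt_length b cs hmL
        rw [wf] at hw
        omega
      · rw [if_neg hr]
        have hw' : cs.length = s r + 1 ∧ (∀ x ∈ labelsL cs, x < r) ∧ wfL s cs := hw
        simp [mem] at hm
        rcases hm with hm | hm
        · -- b is the root; then c is absent below, so cardL = 0
          have hcabs : memL c cs = false := by
            by_contra h
            have := memL_labelsL c cs (by simpa using h)
            have := hw'.2.1 c this
            omega
          rw [cardL_eq_zero_of_y_absent s c b cs hcabs]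
          exact Nat.zero_le _
        · exact cardL_le s b c hbc cs hw'.2.2 hm
  theorem cardL_le (s : ℕ → ℕ) (b c : ℕ) (hbc : b < c) :
      ∀ cs, wfL s cs → memL b cs = true → cardL s c b cs ≤ s c
    | t :: ts, hw, hm => by
      rw [cardL]
      by_cases hc : mem c t = true
      · rw [if_pos hc]
        by_cases hb : mem b t = true
        · rw [if_pos hb]; exact card_le s b c hbc t hw.1 hb
        · rw [if_neg hb]
          by_cases hb' : memL b ts = true
          · rw [if_pos hb']
          · rw [if_neg hb']; exact Nat.zero_le _
      · rw [if_neg hc]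
        by_cases hb : mem b t = true
        · rw [if_pos hb]; exact Nat.zero_le _
        · rw [if_neg hb]
          simp [memL, hb] at hm
          exact cardL_le s b c hbc ts hw.2 hm
end

theorem cardL_idxOf (s : ℕ → ℕ) (a b : ℕ) :
    ∀ cs, cardL s b a cs = 0 ∨ idxOf b cs ≤ idxOf a cs
  | [] => Or.inl rfl
  | t :: ts => by
    by_cases hb : mem b t = true
    · right; rw [idxOf, if_pos hb]; exact Nat.zero_le _
    · rw [cardL, if_neg hb, idxOf, idxOf, if_neg hb]
      by_cases ha : mem a t = true
      · left; rw [if_pos ha]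
      · rw [if_neg ha, if_neg ha]
        rcases cardL_idxOf s a b ts with h | h
        · exact Or.inl h
        · exact Or.inr (by omega)

mutual
  theorem card_trans (s : ℕ → ℕ) (a b c : ℕ) (hab : a < b) (hbc : b < c) :
      ∀ T, wf s T → card s b a T = 0 ∨ card s c b T ≤ card s c a T
    | .leaf, _ => Or.inl rfl
    | .node r cs, hw => by
      have hw' : cs.length = s r + 1 ∧ (∀ x ∈ labelsL cs, x < r) ∧ wfL s cs := hw
      by_cases hrc : r = c
      · -- root is c
        have hrb : ¬ r = b := by omega
        rw [card, card, card, if_pos hrc, if_pos hrc, if_neg hrb]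
        rcases cardL_idxOf s a b cs with h | h
        · exact Or.inl h
        · exact Or.inr h
      · by_cases hrb : r = b
        · -- root is b, so c absent below
          have hrc' : ¬ r = c := hrc
          right
          rw [card, card, if_neg hrc', if_neg hrc']
          have hcabs : memL c cs = false := by
            by_contra h
            have := memL_labelsL c cs (by simpa using h)
            have := hw'.2.1 c this
            omega
          rw [cardL_eq_zero_of_y_absent s c b cs hcabs]
          exact Nat.zero_le _
        · by_cases hra : r = a
          · -- root is a, so b absent below
            left
            rw [card, if_neg hrb]
            have hbabs : memL b cs = false := by
              by_contra h
              have := memL_labelsL b cs (by simpa using h)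
              have := hw'.2.1 b this
              omega
            exact cardL_eq_zero_of_y_absent s b a cs hbabs
          · rw [card, card, card, if_neg hrb, if_neg hrc, if_neg hrc]
            exact cardL_trans s a b c hab hbc cs hw'.2.2
  theorem cardL_trans (s : ℕ → ℕ) (a b c : ℕ) (hab : a < b) (hbc : b < c) :
      ∀ cs, wfL s cs → cardL s b a cs = 0 ∨ cardL s c b cs ≤ cardL s c a cs
    | [], _ => Or.inl rfl
    | t :: ts, hw => by
      have hw' : wf s t ∧ wfL s ts := hw
      rw [cardL, cardL, cardL]
      by_cases hc : mem c t = true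
      · rw [if_pos hc, if_pos hc]
        by_cases hb : mem b t = true
        · rw [if_pos hb, if_pos hb]
          by_cases ha : mem a t = true
          · rw [if_pos ha, if_pos ha]
            exact card_trans s a b c hab hbc t hw'.1
          · rw [if_neg ha, if_neg ha]
            by_cases ha' : memL a ts = true
            · rw [if_pos ha', if_pos ha']
              exact Or.inr (card_le s b c hbc t hw'.1 hb)
            · rw [if_neg ha']
              exact Or.inl rfl
        · rw [if_neg hb, if_neg hb]
          by_cases hb' : memL b ts = true
          · rw [if_pos hb']
            by_cases ha : mem a t = true
            · left; rw [if_pos ha]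
            · rw [if_neg ha, if_neg ha]
              by_cases ha' : memL a ts = true
              · rw [if_pos ha']; exact Or.inr le_rfl
              · left
                exact cardL_eq_zero_of_x_absent s b a ts (by simpa using ha')
          · rw [if_neg hb']; right; exact Nat.zero_le _
      · rw [if_neg hc, if_neg hc]
        by_cases hb : mem b t = true
        · right
          rw [if_pos hb]
          exact Nat.zero_le _
        · rw [if_neg hb, if_neg hb]
          by_cases ha : mem a t = true
          · left; rw [if_pos ha]
          · rw [if_neg ha, if_neg ha]
            exact cardL_trans s a b c hab hbc ts hw'.2
end


end STree

open STree in
/-- The tree-inversions of any `s`-decreasing tree satisfy transitivity: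
for `a < b < c`, if `card(c,b) = i` then `card(b,a) = 0` or `card(c,a) ≥ i`. -/
theorem treeInv_transitive (n : ℕ) (s : ℕ → ℕ) (T : STree)
    (hT : IsSDecreasingTree n s T) :
    ∀ a b c : ℕ, a < b → b < c →
      treeInv n s T b a = 0 ∨ treeInv n s T c b ≤ treeInv n s T c a := by
  intro a b c hab hbc
  simp only [treeInv]
  by_cases h1 : 1 ≤ a ∧ a < b ∧ b ≤ n
  · by_cases h2 : 1 ≤ b ∧ b < c ∧ c ≤ n
    · rw [if_pos h1, if_pos h2, if_pos (show 1 ≤ a ∧ a < c ∧ c ≤ n by omega)]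
      exact card_trans s a b c hab hbc T hT.1
    · right; rw [if_neg h2]; exact Nat.zero_le _
  · left; rw [if_neg h1]
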